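/- arXiv:1507.06691 — 3 statements merged into one kernel-verified Lean document; each statement's English description precedes it below -/
import Mathlib

section
/- Let U be a Banach space, V a Hilbert space, and b : U × V → ℝ a bounded bilinear form satisfying: (i) if b(u,v)=0 for all v ∈ V then u=0, and (ii) there is γ>0 with γ‖v‖_V ≤ sup_{u∈U, u≠0} b(u,v)/‖u‖_U for all v ∈ V. Then the map u ↦ ‖u‖_E := sup_{v∈V, v≠0} b(u,v)/‖v‖_V defines a norm on U equivalent to ‖·‖_U, and in particular γ‖u‖_U ≤ ‖u‖_E for all u ∈ U. -/
/-!
The supremum defining `E u` is the dual norm `‖b u‖`, so `E` is the norm of `V'` pulled back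
along the injective map `b`, which gives everything except the lower bound.

For the lower bound, compose `b` with the Riesz map to get `A : U → V`. The inf-sup condition says
that the adjoint of `A` is bounded below by `γ`, so by Hahn–Banach the closure of the image of the
unit ball of `U` contains the ball of radius `γ`. Running the iteration of the open mapping
theorem with arbitrarily small errors then produces exact preimages of norm at most
`(‖v‖ + ε) / γ`, and by injectivity the preimage of `A u` is `u` itself.
-/

open Metric Filter Topology Pointwise

namespace ContinuousLinearMap

section OpenMapping

variable {E F : Type*} [NormedAddCommGroup E] [NormedSpace ℝ E]
  [NormedAddCommGroup F] [NormedSpace ℝ F]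

theorem closedBall_mul_subset_closure_image_closedBall (f : E →L[ℝ] F) {r : ℝ} (hr : 0 ≤ r)
    (h : closedBall (0 : F) r ⊆ closure (f '' closedBall 0 1)) {t : ℝ} (ht : 0 ≤ t) :
    closedBall (0 : F) (t * r) ⊆ closure (f '' closedBall 0 t) :=
  calc closedBall (0 : F) (t * r) = t • closedBall (0 : F) r := by
        rw [_root_.smul_closedBall _ _ hr, smul_zero, Real.norm_of_nonneg ht]
    _ ⊆ t • closure (f '' closedBall 0 1) := Set.smul_set_mono h
    _ = closure (f '' closedBall 0 t) := by
        rw [← closure_smul₀, ← image_smul_set, _root_.smul_closedBall _ _ zero_le_one, smul_zero,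
          Real.norm_of_nonneg ht, mul_one]

theorem exists_eq_norm_le_of_closedBall_subset_closure [CompleteSpace E] (f : E →L[ℝ] F)
    {r : ℝ} (hr : 0 < r) (h : closedBall (0 : F) r ⊆ closure (f '' closedBall 0 1)) (y : F)
    {ε : ℝ} (hε : 0 < ε) : ∃ x, f x = y ∧ ‖x‖ ≤ (‖y‖ + ε) / r := by
  have approx : ∀ (z : F) (n : ℕ), ∃ x, ‖x‖ ≤ ‖z‖ / r ∧ ‖z - f x‖ ≤ ε / 2 / 2 ^ n := by
    intro z n
    have hz : z ∈ closure (f '' closedBall (0 : E) (‖z‖ / r)) :=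
      f.closedBall_mul_subset_closure_image_closedBall hr.le h (by positivity)
        (by rw [div_mul_cancel₀ _ hr.ne']; exact mem_closedBall_zero_iff.2 le_rfl)
    obtain ⟨_, ⟨x, hx, rfl⟩, hzx⟩ := Metric.mem_closure_iff.1 hz (ε / 2 / 2 ^ n) (by positivity)
    exact ⟨x, mem_closedBall_zero_iff.1 hx, (dist_eq_norm z (f x)).symm ▸ hzx.le⟩
  choose g hg_norm hg_approx using approx
  -- partial sums of the series of successive corrections of the residual `y - f (s n)`
  let s : ℕ → E := fun n => Nat.rec (g y 0) (fun n sn => sn + g (y - f sn) (n + 1)) n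
  have hres : ∀ n, ‖y - f (s n)‖ ≤ ε / 2 / 2 ^ n := by
    intro n
    induction n with
    | zero => exact hg_approx y 0
    | succ n _ =>
      have hs : y - f (s (n + 1)) = (y - f (s n)) - f (g (y - f (s n)) (n + 1)) := by
        simp only [s, map_add]; abel
      rw [hs]
      exact hg_approx _ _
  have hdist : ∀ n, dist (s n) (s (n + 1)) ≤ ε / r / 2 / 2 ^ n := by
    intro n
    rw [dist_eq_norm', show s (n + 1) - s n = g (y - f (s n)) (n + 1) from add_sub_cancel_left _ _]
    calc _ ≤ ‖y - f (s n)‖ / r := hg_norm _ _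
      _ ≤ ε / 2 / 2 ^ n / r := by gcongr; exact hres n
      _ = ε / r / 2 / 2 ^ n := by ring
  obtain ⟨x, hx⟩ := cauchySeq_tendsto_of_complete (cauchySeq_of_le_geometric_two hdist)
  have hfs : Tendsto (fun n => f (s n)) atTop (𝓝 y) := by
    rw [tendsto_iff_norm_sub_tendsto_zero]
    refine squeeze_zero (fun _ => norm_nonneg _) (fun n => (norm_sub_rev _ _).trans_le (hres n)) ?_
    exact tendsto_const_nhds.div_atTop (tendsto_pow_atTop_atTop_of_one_lt one_lt_two)
  refine ⟨x, tendsto_nhds_unique ((f.continuous.tendsto x).comp hx) hfs, ?_⟩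
  calc ‖x‖ ≤ ‖s 0‖ + dist (s 0) x := by
        simpa [dist_eq_norm'] using norm_le_norm_add_norm_sub' x (s 0)
    _ ≤ ‖y‖ / r + ε / r :=
        add_le_add (hg_norm y 0) (dist_le_of_le_geometric_two_of_tendsto₀ hdist hx)
    _ = (‖y‖ + ε) / r := by ring

theorem mul_norm_le_norm_apply_of_closedBall_subset_closure [CompleteSpace E] (f : E →L[ℝ] F)
    {r : ℝ} (hr : 0 < r) (h : closedBall (0 : F) r ⊆ closure (f '' closedBall 0 1))
    (hf : Function.Injective f) (x : E) : r * ‖x‖ ≤ ‖f x‖ := by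
  refine le_of_forall_pos_le_add fun ε hε => ?_
  obtain ⟨x', hx', hle⟩ := f.exists_eq_norm_le_of_closedBall_subset_closure hr h (f x) hε
  rw [hf hx', le_div_iff₀ hr] at hle
  linarith

theorem closedBall_subset_closure_image_closedBall_of_mul_norm_le_norm_comp (T : E →L[ℝ] F) {γ : ℝ}
    (h : ∀ φ : StrongDual ℝ F, γ * ‖φ‖ ≤ ‖φ.comp T‖) :
    closedBall (0 : F) γ ⊆ closure (T '' closedBall 0 1) := by
  intro y hy
  by_contra hyT
  obtain ⟨φ, c, hφc, hcφ⟩ := geometric_hahn_banach_closed_point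
    ((convex_closedBall (0 : E) 1).linear_image T.toLinearMap).closure isClosed_closure hyT
  have hT : ∀ x ∈ closedBall (0 : E) 1, φ (T x) < c := fun x hx =>
    hφc _ (subset_closure ⟨x, hx, rfl⟩)
  have hφT : ‖φ.comp T‖ ≤ c := by
    refine opNorm_le_of_unit_norm (by simpa using (hT 0 (by simp)).le) fun x hx => ?_
    have h₁ := hT x (by simp [hx])
    have h₂ := hT (-x) (by simp [hx])
    rw [map_neg, map_neg] at h₂
    rw [Real.norm_eq_abs, comp_apply]
    exact abs_le.2 ⟨by linarith, h₁.le⟩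
  have hφy : φ y ≤ ‖φ‖ * γ :=
    (le_abs_self _).trans ((φ.le_opNorm y).trans (by gcongr; simpa using hy))
  linarith [h φ]

end OpenMapping

theorem sSup_div_norm_eq_norm {E : Type*} [NormedAddCommGroup E] [NormedSpace ℝ E]
    (ψ : StrongDual ℝ E) : sSup {r : ℝ | ∃ x : E, x ≠ 0 ∧ r = ψ x / ‖x‖} = ‖ψ‖ := by
  rcases subsingleton_or_nontrivial E with hE | hE
  · have hempty : {r : ℝ | ∃ x : E, x ≠ 0 ∧ r = ψ x / ‖x‖} = ∅ :=
      Set.eq_empty_of_forall_notMem fun r ⟨x, hx, _⟩ => hx (Subsingleton.elim x 0)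
    rw [hempty, Real.sSup_empty, Subsingleton.elim ψ 0, norm_zero]
  obtain ⟨x₀, hx₀⟩ := exists_ne (0 : E)
  refine IsLUB.csSup_eq ⟨?_, fun b hb => ?_⟩ ⟨_, x₀, hx₀, rfl⟩
  · rintro _ ⟨x, hx, rfl⟩
    rw [div_le_iff₀ (norm_pos_iff.2 hx)]
    exact (le_abs_self _).trans (ψ.le_opNorm x)
  have hb' : ∀ x : E, x ≠ 0 → |ψ x| ≤ b * ‖x‖ := fun x hx => by
    have h₁ := (div_le_iff₀ (norm_pos_iff.2 hx)).1 (hb ⟨x, hx, rfl⟩)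
    have h₂ := (div_le_iff₀ (norm_pos_iff.2 (neg_ne_zero.2 hx))).1 (hb ⟨-x, neg_ne_zero.2 hx, rfl⟩)
    rw [map_neg, norm_neg] at h₂
    exact abs_le.2 ⟨by linarith, h₁⟩
  have hb₀ : 0 ≤ b := nonneg_of_mul_nonneg_left ((abs_nonneg _).trans (hb' x₀ hx₀))
    (norm_pos_iff.2 hx₀)
  refine ψ.opNorm_le_bound hb₀ fun x => ?_
  rcases eq_or_ne x 0 with rfl | hx
  · simp
  · exact hb' x hx

theorem mul_norm_le_norm_apply_of_mul_norm_le_norm_flip {U V : Type*}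
    [NormedAddCommGroup U] [NormedSpace ℝ U] [CompleteSpace U]
    [NormedAddCommGroup V] [InnerProductSpace ℝ V] [CompleteSpace V]
    (b : U →L[ℝ] V →L[ℝ] ℝ) (hb : Function.Injective b) {γ : ℝ} (hγ : 0 < γ)
    (h : ∀ v, γ * ‖v‖ ≤ ‖b.flip v‖) (u : U) : γ * ‖u‖ ≤ ‖b u‖ := by
  let R : StrongDual ℝ V →L[ℝ] V :=
    (InnerProductSpace.toDual ℝ V).symm.toContinuousLinearEquiv.toContinuousLinearMap
  have hR : ∀ φ : StrongDual ℝ V, φ.comp (R.comp b) = b.flip (R φ) := fun φ => by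
    ext u
    change φ (R (b u)) = b u (R φ)
    rw [← InnerProductSpace.toDual_symm_apply, real_inner_comm]
    exact InnerProductSpace.toDual_symm_apply
  have hR_norm : ∀ φ, ‖R φ‖ = ‖φ‖ := (InnerProductSpace.toDual ℝ V).symm.norm_map
  have hball := (R.comp b).closedBall_subset_closure_image_closedBall_of_mul_norm_le_norm_comp
    fun φ => by
      rw [hR, ← hR_norm]
      exact h (R φ)
  rw [← hR_norm]
  exact (R.comp b).mul_norm_le_norm_apply_of_closedBall_subset_closure hγ hball
    ((InnerProductSpace.toDual ℝ V).symm.injective.comp hb) u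

end ContinuousLinearMap

/-- the energy norm `u ↦ sup_{v ≠ 0} b(u,v)/‖v‖` is a norm on `U`
equivalent to `‖·‖_U`, with lower bound constant `γ` from the inf-sup condition. -/
theorem dpg_energy_norm_equivalence
    (U V : Type*) [NormedAddCommGroup U] [NormedSpace ℝ U] [CompleteSpace U]
    [NormedAddCommGroup V] [InnerProductSpace ℝ V] [CompleteSpace V]
    (b : U →L[ℝ] V →L[ℝ] ℝ)
    (hinj : ∀ u : U, (∀ v : V, b u v = 0) → u = 0)
    (γ : ℝ) (hγ : 0 < γ)
    (hinfsup : ∀ v : V, γ * ‖v‖ ≤ sSup {r : ℝ | ∃ u : U, u ≠ 0 ∧ r = b u v / ‖u‖})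
    (E : U → ℝ)
    (hE : ∀ u : U, E u = sSup {r : ℝ | ∃ v : V, v ≠ 0 ∧ r = b u v / ‖v‖}) :
    -- E is a norm on U:
    (∀ u u' : U, E (u + u') ≤ E u + E u') ∧
    (∀ (a : ℝ) (u : U), E (a • u) = |a| * E u) ∧
    (∀ u : U, 0 ≤ E u) ∧
    (∀ u : U, E u = 0 → u = 0) ∧
    -- E is equivalent to the norm of U, with lower constant γ:
    (∀ u : U, γ * ‖u‖ ≤ E u) ∧ (∃ C : ℝ, 0 < C ∧ ∀ u : U, E u ≤ C * ‖u‖) := by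
  have hEb : ∀ u, E u = ‖b u‖ := fun u => (hE u).trans (b u).sSup_div_norm_eq_norm
  have hflip : ∀ v, γ * ‖v‖ ≤ ‖b.flip v‖ := fun v =>
    (hinfsup v).trans_eq (b.flip v).sSup_div_norm_eq_norm
  have hb : Function.Injective b :=
    (injective_iff_map_eq_zero b).2 fun u hu => hinj u fun v => by simp [hu]
  simp only [hEb]
  refine ⟨fun u u' => by rw [map_add]; exact norm_add_le _ _,
    fun a u => by rw [map_smul, norm_smul, Real.norm_eq_abs], fun u => norm_nonneg _,
    fun u hu => hb (by rwa [map_zero, ← norm_eq_zero]),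
    b.mul_norm_le_norm_apply_of_mul_norm_le_norm_flip hb hγ hflip,
    ⟨‖b‖ + 1, by positivity, fun u => (b.le_opNorm u).trans (by gcongr; linarith)⟩⟩
end

section
/- Let U be a Banach space, V a Hilbert space, and b : U × V → ℝ a bounded bilinear form satisfying the injectivity condition and the inf-sup condition with constant γ > 0. Then for every bounded linear functional ℓ ∈ V' there exists a unique u ∈ U with b(u,v) = ℓ(v) for all v ∈ V, and this u satisfies ‖u‖_E ≤ ‖ℓ‖_{V'}, where ‖u‖_E = sup_{v≠0} b(u,v)/‖v‖_V. -/
/-!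
Through the Riesz map, `b` becomes `T : U →L[ℝ] V` with `⟪T u, v⟫ = b u v`, and the inf-sup
condition says that `f ∘ T` has norm at least `γ ‖f‖` for every functional `f` on `V`. By
Hahn–Banach, the closure of `T (closedBall 0 (‖y‖ / γ))` then contains `y`, and the iteration from
the proof of the open mapping theorem, using completeness of `U`, makes `T` surjective. Injectivity
gives uniqueness, and `‖u‖_E ≤ ‖ℓ‖` holds because each quotient `ℓ v / ‖v‖` is at most `‖ℓ‖`.
-/

open Metric Filter Function InnerProductSpace

theorem sSup_div_norm_le_opNorm {E : Type*} [SeminormedAddCommGroup E] [NormedSpace ℝ E]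
    (g : StrongDual ℝ E) : sSup {r : ℝ | ∃ x : E, x ≠ 0 ∧ r = g x / ‖x‖} ≤ ‖g‖ := by
  refine Real.sSup_le ?_ g.opNorm_nonneg
  rintro r ⟨x, -, rfl⟩
  exact div_le_of_le_mul₀ (norm_nonneg x) g.opNorm_nonneg
    ((le_abs_self _).trans (by simpa [mul_comm] using g.le_opNorm x))

/-- A functional with `f < c` on the image of the ball and `c < f y` would satisfy
`γ ‖f‖ ≤ ‖f ∘ T‖ ≤ γ c / ‖y‖`, hence `f y ≤ ‖f‖ ‖y‖ ≤ c`. -/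
theorem mem_closure_image_closedBall_of_le_norm_comp {E F : Type*} [NormedAddCommGroup E]
    [NormedSpace ℝ E] [NormedAddCommGroup F] [NormedSpace ℝ F] (T : E →L[ℝ] F) {γ : ℝ}
    (hγ : 0 < γ) (hT : ∀ f : StrongDual ℝ F, γ * ‖f‖ ≤ ‖f.comp T‖) (y : F) :
    y ∈ closure (T '' closedBall 0 (γ⁻¹ * ‖y‖)) := by
  rcases eq_or_ne y 0 with rfl | hy
  · exact subset_closure ⟨0, by simp, map_zero T⟩
  set r := γ⁻¹ * ‖y‖
  have hr : 0 < r := by positivity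
  by_contra hyK
  obtain ⟨f, c, hfK, hcy⟩ := geometric_hahn_banach_closed_point
    (((convex_closedBall 0 r).linear_image T.toLinearMap).closure) isClosed_closure hyK
  have hbound : ∀ z ∈ closedBall (0 : E) r, ‖f.comp T z‖ ≤ c := by
    intro z hz
    have hpos : f (T z) < c := hfK _ (subset_closure ⟨z, hz, rfl⟩)
    have hneg : f (T (-z)) < c := hfK _ (subset_closure ⟨-z, by simpa using hz, rfl⟩)
    rw [map_neg, map_neg] at hneg
    rw [Real.norm_eq_abs, ContinuousLinearMap.comp_apply, abs_le]
    constructor <;> linarith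
  have hnorm : γ * ‖f‖ ≤ c / r :=
    (hT f).trans (ContinuousLinearMap.opNorm_bound_of_ball_bound hr c _ hbound)
  have hfy : ‖f‖ * ‖y‖ ≤ c := by
    rwa [le_div_iff₀ hr, mul_mul_mul_comm, mul_inv_cancel₀ hγ.ne', one_mul] at hnorm
  linarith [(le_abs_self (f y)).trans (f.le_opNorm y)]

section ApproxPreimage

variable {𝕜 E F : Type*} [NormedField 𝕜] [NormedAddCommGroup E] [NormedSpace 𝕜 E]
  [NormedAddCommGroup F] [NormedSpace 𝕜 F]

theorem exists_approx_preimage_of_mem_closure_image (f : E →L[𝕜] F) (C : ℝ)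
    (hf : ∀ y, y ∈ closure (f '' closedBall 0 (C * ‖y‖))) (y : F) :
    ∃ x, ‖x‖ ≤ C * ‖y‖ ∧ ‖y - f x‖ ≤ ‖y‖ / 2 := by
  rcases eq_or_ne y 0 with rfl | hy
  · exact ⟨0, by simp, by simp⟩
  obtain ⟨_, ⟨x, hx, rfl⟩, hxy⟩ := mem_closure_iff.mp (hf y) (‖y‖ / 2) (by positivity)
  exact ⟨x, by simpa using hx, by rw [← dist_eq_norm]; exact hxy.le⟩

/-- The remainders `rem n` halve at each step, so the approximate preimages `g (rem n)` form an
absolutely convergent series, whose sum is a preimage of `y`. -/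
theorem surjective_of_approx_preimage [CompleteSpace E] (f : E →L[𝕜] F) (C : ℝ)
    (happrox : ∀ y, ∃ x, ‖x‖ ≤ C * ‖y‖ ∧ ‖y - f x‖ ≤ ‖y‖ / 2) :
    Surjective f := by
  choose g hg_norm hg_sub using happrox
  intro y
  set rem : ℕ → F := fun n => (fun z => z - f (g z))^[n] y
  have hrem : ∀ n, ‖rem n‖ ≤ (1 / 2) ^ n * ‖y‖ := by
    intro n
    induction n with
    | zero => simp [rem]
    | succ n ih =>
      calc ‖rem (n + 1)‖ = ‖rem n - f (g (rem n))‖ := by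
            simp only [rem, iterate_succ_apply']
        _ ≤ ‖rem n‖ / 2 := hg_sub _
        _ ≤ (1 / 2) ^ (n + 1) * ‖y‖ := by rw [pow_succ]; linarith
  have hpartial : ∀ n, f (∑ i ∈ Finset.range n, g (rem i)) = y - rem n := by
    intro n
    induction n with
    | zero => simp [rem]
    | succ n ih =>
      rw [Finset.sum_range_succ, map_add, ih]
      simp only [rem, iterate_succ_apply']
      abel
  have hsum : Summable fun n => g (rem n) :=
    .of_norm_bounded (.mul_left C (.of_nonneg_of_le (fun n => norm_nonneg _) hrem
      (summable_geometric_two.mul_right ‖y‖))) fun n => hg_norm (rem n)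
  have hrem_lim : Tendsto rem atTop (nhds 0) := by
    refine squeeze_zero_norm hrem ?_
    simpa using (tendsto_pow_atTop_nhds_zero_of_lt_one (by norm_num) (by norm_num :
      (1 / 2 : ℝ) < 1)).mul_const ‖y‖
  refine ⟨∑' n, g (rem n), tendsto_nhds_unique
    ((f.continuous.tendsto _).comp hsum.hasSum.tendsto_sum_nat) ?_⟩
  simpa [comp_def, hpartial] using tendsto_const_nhds.sub hrem_lim

end ApproxPreimage

theorem surjective_of_le_norm_flip {U V : Type*} [NormedAddCommGroup U] [NormedSpace ℝ U]
    [CompleteSpace U] [NormedAddCommGroup V] [InnerProductSpace ℝ V] [CompleteSpace V]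
    (b : U →L[ℝ] StrongDual ℝ V) {γ : ℝ} (hγ : 0 < γ) (hb : ∀ v : V, γ * ‖v‖ ≤ ‖b.flip v‖) :
    Surjective b := by
  set T : U →L[ℝ] V :=
    ((toDual ℝ V).symm.toContinuousLinearEquiv.toContinuousLinearMap).comp b
  have hT : ∀ f : StrongDual ℝ V, γ * ‖f‖ ≤ ‖f.comp T‖ := by
    intro f
    have hfT : f.comp T = b.flip ((toDual ℝ V).symm f) := by
      ext u
      rw [ContinuousLinearMap.comp_apply, ← toDual_symm_apply, real_inner_comm]
      simp [T, toDual_symm_apply]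
    simpa [hfT] using hb ((toDual ℝ V).symm f)
  have hTsurj : Surjective T := surjective_of_approx_preimage T γ⁻¹
    (exists_approx_preimage_of_mem_closure_image T γ⁻¹
      (mem_closure_image_closedBall_of_le_norm_comp T hγ hT))
  intro ℓ
  obtain ⟨u, hu⟩ := hTsurj ((toDual ℝ V).symm ℓ)
  exact ⟨u, by simpa [T] using congrArg (toDual ℝ V) hu⟩

/-- under injectivity and inf-sup, for every `ℓ ∈ V'` the variational
problem `b(u,v) = ℓ(v)` for all `v` has a unique solution `u`, with `‖u‖_E ≤ ‖ℓ‖_{V'}`. -/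
theorem dpg_continuous_wellposedness
    (U V : Type*) [NormedAddCommGroup U] [NormedSpace ℝ U] [CompleteSpace U]
    [NormedAddCommGroup V] [InnerProductSpace ℝ V] [CompleteSpace V]
    (b : U →L[ℝ] V →L[ℝ] ℝ)
    (hinj : ∀ u : U, (∀ v : V, b u v = 0) → u = 0)
    (γ : ℝ) (hγ : 0 < γ)
    (hinfsup : ∀ v : V, γ * ‖v‖ ≤ sSup {r : ℝ | ∃ u : U, u ≠ 0 ∧ r = b u v / ‖u‖})
    (E : U → ℝ)
    (hE : ∀ u : U, E u = sSup {r : ℝ | ∃ v : V, v ≠ 0 ∧ r = b u v / ‖v‖})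
    (ℓ : V →L[ℝ] ℝ) :
    (∃! u : U, ∀ v : V, b u v = ℓ v) ∧
    (∀ u : U, (∀ v : V, b u v = ℓ v) → E u ≤ ‖ℓ‖) := by
  have hb : ∀ v, γ * ‖v‖ ≤ ‖b.flip v‖ := fun v =>
    (hinfsup v).trans (sSup_div_norm_le_opNorm (b.flip v))
  have hbij : Bijective b :=
    ⟨(injective_iff_map_eq_zero b).mpr fun u hu => hinj u fun v => by simp [hu],
      surjective_of_le_norm_flip b hγ hb⟩
  refine ⟨by simpa [ContinuousLinearMap.ext_iff] using hbij.existsUnique ℓ, fun u hu => ?_⟩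
  rw [hE, show b u = ℓ from ContinuousLinearMap.ext hu]
  exact sSup_div_norm_le_opNorm ℓ
end

section
/- Let 𝒯 be a quasi-uniform partition of I=(0,1) into N intervals and τ a piecewise H¹ function on 𝒯. Then ‖τ‖_{L²(I)} ≤ C (‖D_𝒯 τ‖_{L²(I)} + N^{1/2} |[τ]|), where D_𝒯 denotes the piecewise derivative and [τ] ∈ ℝ^{N+1} the vector of jumps of τ at the nodes (including boundary traces), with C independent of 𝒯. -/
/-!
A piecewise `H¹` function is controlled pointwise by its total variation: walking from `0` to a
point `t`, the value `τ(t)` is the sum of the jumps crossed and of the integrals of `D_𝒯 τ` over the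
elements crossed, so `‖τ‖_∞ ≤ ∑ |[τ]_j| + ‖D_𝒯 τ‖_{L¹}`. By Cauchy–Schwarz the first sum is at most
`√(N + 1) |[τ]|` and, the elements having total length `1`, the second term is at most
`‖D_𝒯 τ‖_{L²}`; since `|I| = 1`, also `‖τ‖_{L²} ≤ ‖τ‖_∞`. This gives the inequality with `C = 2`.
-/

open MeasureTheory Set Finset

theorem integral_abs_le_sqrt_measureReal_univ_mul_sqrt {α : Type*} [MeasurableSpace α]
    {μ : Measure α} [IsFiniteMeasure μ] {f : α → ℝ} (hf : MemLp f 2 μ) :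
    ∫ a, |f a| ∂μ ≤ √(μ.real univ) * √(∫ a, f a ^ 2 ∂μ) := by
  have h := integral_mul_le_Lp_mul_Lq_of_nonneg (μ := μ) Real.HolderConjugate.two_two
    (f := fun _ => (1 : ℝ)) (g := fun a => |f a|) (ae_of_all _ fun _ => zero_le_one)
    (ae_of_all _ fun _ => abs_nonneg _) (memLp_const 1)
    (by rw [ENNReal.ofReal_ofNat]; exact hf.abs)
  simpa [Real.sqrt_eq_rpow] using h

theorem abs_intervalIntegral_le_setIntegral_abs_Ioo {g : ℝ → ℝ} {a b t : ℝ} (hat : a ≤ t)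
    (htb : t ≤ b) (hg : IntegrableOn g (Ioo a b)) :
    |∫ u in a..t, g u| ≤ ∫ u in Ioo a b, |g u| :=
  calc |∫ u in a..t, g u| ≤ ∫ u in a..t, |g u| := intervalIntegral.abs_integral_le_integral_abs hat
    _ = ∫ u in Ioo a t, |g u| := by
      rw [intervalIntegral.integral_of_le hat, integral_Ioc_eq_integral_Ioo]
    _ ≤ ∫ u in Ioo a b, |g u| := setIntegral_mono_set hg.abs
      (ae_of_all _ fun _ => abs_nonneg _) (Ioo_subset_Ioo_right htb).eventuallyLE

theorem setIntegral_sq_le_of_abs_le {α : Type*} [MeasurableSpace α] {μ : Measure α} {s : Set α}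
    {f : α → ℝ} {M : ℝ} (hs : μ s < ⊤) (hf : ∀ t ∈ s, |f t| ≤ M) :
    ∫ t in s, f t ^ 2 ∂μ ≤ M ^ 2 * μ.real s := by
  refine (le_abs_self _).trans
    (norm_setIntegral_le_of_norm_le_const (f := fun t => f t ^ 2) hs fun t ht => ?_)
  rw [Real.norm_eq_abs, abs_pow]
  exact pow_le_pow_left₀ (abs_nonneg _) (hf t ht) 2

theorem abs_le_sum_abs_add_sum_of_abs_sub_le {N : ℕ} {a J w : ℕ → ℝ} (h0 : a 0 = J 0)
    (hsucc : ∀ i, i + 1 < N → |a (i + 1) - a i - J (i + 1)| ≤ w i) :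
    ∀ i < N, |a i| ≤ ∑ j ∈ range (i + 1), |J j| + ∑ k ∈ range i, w k := by
  intro i hi
  induction i with
  | zero => simp [h0]
  | succ i ih =>
    have hstep := hsucc i hi
    have hprev := ih (by omega)
    rw [sum_range_succ (fun j => |J j|) (i + 1), sum_range_succ w i]
    calc |a (i + 1)| = |a i + J (i + 1) + (a (i + 1) - a i - J (i + 1))| := by ring_nf
      _ ≤ |a i| + |J (i + 1)| + |a (i + 1) - a i - J (i + 1)| := abs_add_three _ _ _
      _ ≤ _ := by linarith

def jump (N : ℕ) (x : ℕ → ℝ) (τ : ℕ → ℝ → ℝ) (j : ℕ) : ℝ :=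
  (if j < N then τ j (x j) else 0) - (if j = 0 then 0 else τ (j - 1) (x j))

section Piecewise

variable {N : ℕ} {x : ℕ → ℝ} {g : ℕ → ℝ → ℝ}

theorem abs_piecewise_le_sum_abs_jump_add {a : ℕ → ℝ} {τ : ℕ → ℝ → ℝ} (hN : 0 < N)
    (hx : ∀ i < N, x i ≤ x (i + 1)) (hg : ∀ i < N, IntegrableOn (g i) (Ioo (x i) (x (i + 1))))
    (hτ : ∀ i < N, ∀ t, τ i t = a i + ∫ u in (x i)..t, g i u) {i : ℕ} (hi : i < N) {t : ℝ}
    (ht : t ∈ Ioo (x i) (x (i + 1))) :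
    |τ i t| ≤ ∑ j ∈ range (N + 1), |jump N x τ j| +
      ∑ k ∈ range N, ∫ u in Ioo (x k) (x (k + 1)), |g k u| := by
  have hleft : ∀ i < N, τ i (x i) = a i := fun i hi => by
    simp [hτ i hi]
  have hnodes := abs_le_sum_abs_add_sum_of_abs_sub_le (N := N) (a := a) (J := jump N x τ)
    (w := fun k => ∫ u in Ioo (x k) (x (k + 1)), |g k u|) (by simp [jump, hN, hleft 0 hN])
    (fun k hk => by
      have hjump : jump N x τ (k + 1) = a (k + 1) - τ k (x (k + 1)) := by
        simp [jump, hk, hleft (k + 1) hk]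
      rw [hjump, hτ k (by omega), show ∀ p q r : ℝ, q - p - (q - (p + r)) = r by intros; ring]
      exact abs_intervalIntegral_le_setIntegral_abs_Ioo (hx k (by omega)) le_rfl (hg k (by omega)))
    i hi
  have hinterior : |∫ u in (x i)..t, g i u| ≤ ∫ u in Ioo (x i) (x (i + 1)), |g i u| :=
    abs_intervalIntegral_le_setIntegral_abs_Ioo ht.1.le ht.2.le (hg i hi)
  have hJ : ∑ j ∈ range (i + 1), |jump N x τ j| ≤ ∑ j ∈ range (N + 1), |jump N x τ j| :=
    sum_le_sum_of_subset_of_nonneg (range_subset_range.2 (by omega)) fun _ _ _ => abs_nonneg _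
  have hw : ∑ k ∈ range (i + 1), ∫ u in Ioo (x k) (x (k + 1)), |g k u| ≤
      ∑ k ∈ range N, ∫ u in Ioo (x k) (x (k + 1)), |g k u| :=
    sum_le_sum_of_subset_of_nonneg (range_subset_range.2 hi) fun _ _ _ =>
      setIntegral_nonneg measurableSet_Ioo fun _ _ => abs_nonneg _
  rw [sum_range_succ] at hw
  calc |τ i t| ≤ |a i| + |∫ u in (x i)..t, g i u| := by rw [hτ i hi]; exact abs_add_le _ _
    _ ≤ _ := by linarith

theorem sum_setIntegral_abs_le_sqrt_mul_sqrt (hx : ∀ i < N, x i ≤ x (i + 1))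
    (hg : ∀ i < N, MemLp (g i) 2 (volume.restrict (Ioo (x i) (x (i + 1))))) :
    ∑ k ∈ range N, ∫ u in Ioo (x k) (x (k + 1)), |g k u| ≤
      √(x N - x 0) * √(∑ k ∈ range N, ∫ u in Ioo (x k) (x (k + 1)), g k u ^ 2) := by
  have hlocal : ∀ k ∈ range N, ∫ u in Ioo (x k) (x (k + 1)), |g k u| ≤
      √(x (k + 1) - x k) * √(∫ u in Ioo (x k) (x (k + 1)), g k u ^ 2) := fun k hk => by
    have hk := mem_range.1 hk
    have := integral_abs_le_sqrt_measureReal_univ_mul_sqrt (hg k hk)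
    rwa [measureReal_restrict_apply_univ, Real.volume_real_Ioo_of_le (hx k hk)] at this
  calc _ ≤ ∑ k ∈ range N, √(x (k + 1) - x k) * √(∫ u in Ioo (x k) (x (k + 1)), g k u ^ 2) :=
        sum_le_sum hlocal
    _ ≤ _ := by
      refine (Real.sum_mul_le_sqrt_mul_sqrt _ _ _).trans_eq ?_
      rw [sum_congr rfl fun k hk => Real.sq_sqrt (sub_nonneg.2 (hx k (mem_range.1 hk))),
        sum_congr rfl fun k _ => Real.sq_sqrt (setIntegral_nonneg measurableSet_Ioo
          fun _ _ => sq_nonneg (g k _)), sum_range_sub]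

theorem sum_setIntegral_sq_le_of_abs_le {τ : ℕ → ℝ → ℝ} {M : ℝ} (hx : ∀ i < N, x i ≤ x (i + 1))
    (hτ : ∀ i < N, ∀ t ∈ Ioo (x i) (x (i + 1)), |τ i t| ≤ M) :
    ∑ i ∈ range N, ∫ t in Ioo (x i) (x (i + 1)), τ i t ^ 2 ≤ M ^ 2 * (x N - x 0) :=
  calc _ ≤ ∑ i ∈ range N, M ^ 2 * (x (i + 1) - x i) := sum_le_sum fun i hi => by
        have hi := mem_range.1 hi
        simpa [Real.volume_real_Ioo_of_le (hx i hi)] using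
          setIntegral_sq_le_of_abs_le (measure_Ioo_lt_top (μ := volume)) (hτ i hi)
    _ = M ^ 2 * (x N - x 0) := by rw [← mul_sum, sum_range_sub]

end Piecewise

/-- piecewise Poincaré inequality
`‖τ‖_{L²(0,1)} ≤ C (‖D_𝒯 τ‖_{L²(0,1)} + N^{1/2} |[τ]|)` for piecewise `H¹` functions
`τ` on a quasi-uniform partition of `(0,1)` into `N` intervals. A piecewise `H¹`
function is encoded by its elementwise `L²` derivative `g i` and values
`τ i t = a i + ∫_{x i}^t g i`. -/
theorem piecewise_poincare (cq : ℝ) (hcq : 1 ≤ cq) :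
    ∃ C : ℝ, 0 < C ∧
      ∀ (N : ℕ), 0 < N → ∀ x : ℕ → ℝ, x 0 = 0 → x N = 1 →
      (∀ i < N, 1 / (cq * N) ≤ x (i + 1) - x i ∧ x (i + 1) - x i ≤ cq / N) →
      ∀ (g : ℕ → ℝ → ℝ) (a : ℕ → ℝ),
      (∀ i < N, MemLp (g i) 2 (volume.restrict (Ioo (x i) (x (i + 1))))) →
      (∀ i < N, IntegrableOn (g i) (Ioo (x i) (x (i + 1)))) →
      ∀ τ : ℕ → ℝ → ℝ, (∀ i < N, ∀ t, τ i t = a i + ∫ u in (x i)..t, g i u) →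
      Real.sqrt (∑ i ∈ Finset.range N, ∫ t in Ioo (x i) (x (i + 1)), (τ i t) ^ 2)
        ≤ C * (Real.sqrt (∑ i ∈ Finset.range N, ∫ t in Ioo (x i) (x (i + 1)), (g i t) ^ 2)
            + Real.sqrt N * Real.sqrt (∑ j ∈ Finset.range (N + 1),
                ((if j < N then τ j (x j) else 0)
                  - (if j = 0 then 0 else τ (j - 1) (x j))) ^ 2)) := by
  refine ⟨2, two_pos, fun N hN x hx0 hxN hquasi g a hg2 hg1 τ hτ => ?_⟩
  have hx : ∀ i < N, x i ≤ x (i + 1) := fun i hi =>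
    sub_nonneg.1 <| le_trans (by positivity) (hquasi i hi).1
  change _ ≤ 2 * (_ + _ * √(∑ j ∈ range (N + 1), jump N x τ j ^ 2))
  set M := ∑ j ∈ range (N + 1), |jump N x τ j| +
    ∑ k ∈ range N, ∫ u in Ioo (x k) (x (k + 1)), |g k u|
  have hL2 : ∑ i ∈ range N, ∫ t in Ioo (x i) (x (i + 1)), τ i t ^ 2 ≤ M ^ 2 := by
    simpa [hx0, hxN] using sum_setIntegral_sq_le_of_abs_le hx
      fun i hi t ht => abs_piecewise_le_sum_abs_jump_add hN hx hg1 hτ hi ht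
  have hjump : ∑ j ∈ range (N + 1), |jump N x τ j| ≤
      √(N + 1) * √(∑ j ∈ range (N + 1), jump N x τ j ^ 2) := by
    simpa using Real.sum_mul_le_sqrt_mul_sqrt (range (N + 1)) (fun _ => 1) fun j => |jump N x τ j|
  have hderiv := sum_setIntegral_abs_le_sqrt_mul_sqrt hx hg2
  rw [hx0, hxN, sub_zero, Real.sqrt_one, one_mul] at hderiv
  have hN1 : √((N : ℝ) + 1) ≤ 2 * √N := by
    rw [show (2 : ℝ) = √4 by rw [show (4 : ℝ) = 2 ^ 2 by norm_num, Real.sqrt_sq two_pos.le],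
      ← Real.sqrt_mul (by norm_num)]
    exact Real.sqrt_le_sqrt (by linarith [(Nat.one_le_cast (α := ℝ)).2 hN])
  have hM0 : 0 ≤ M := add_nonneg (sum_nonneg fun _ _ => abs_nonneg _)
    (sum_nonneg fun _ _ => setIntegral_nonneg measurableSet_Ioo fun _ _ => abs_nonneg _)
  calc _ ≤ M := (Real.sqrt_le_left hM0).2 hL2
    _ ≤ _ := by
      linarith [mul_le_mul_of_nonneg_right hN1
        (Real.sqrt_nonneg (∑ j ∈ range (N + 1), jump N x τ j ^ 2)),
        Real.sqrt_nonneg (∑ i ∈ range N, ∫ t in Ioo (x i) (x (i + 1)), g i t ^ 2)]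
end
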